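/- Let A be a ranked alphabet. For every ranked tree t ∈ Trees_A that has at least one internal node, there exists a chain c ∈ Trees_A that has exactly the same number of leaves and exactly the same number of internal nodes as t. -/

import Mathlib

/-- Ranked trees over a set `A` of symbols (the rank of a symbol is given separately
by a function `rank : A → ℕ`; well-formedness is the predicate `RTree.WF`). -/
inductive RTree (A : Type) : Type
  | node : A → List (RTree A) → RTree A

namespace RTree

variable {A : Type}

/-- The subtree `t ↾ x` of `t` rooted at the address `x`; the children of a node with
child list `ts` are addressed by `0, …, ts.length - 1`, and addresses are words of
child indices. Returns `none` if `x` is not a node of `t`. -/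
def subtreeAt : RTree A → List ℕ → Option (RTree A)
  | t, [] => some t
  | node _ ts, i :: x =>
    match ts[i]? with
    | some t' => subtreeAt t' x
    | none => none

/-- The domain `D_t` of `t`: the set of addresses of nodes of `t`. -/
def dom (t : RTree A) : Set (List ℕ) := {x | subtreeAt t x ≠ none}

/-- `size t` is the number of nodes of `t`. -/
noncomputable def size (t : RTree A) : ℕ := (dom t).ncard

/-- The size of the subtree of `t` rooted at `x` (`0` if `x` is not a node of `t`). -/
noncomputable def sizeAt (t : RTree A) (x : List ℕ) : ℕ :=
  match subtreeAt t x with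
  | some s => size s
  | none => 0

/-- The node at address `x` has some child, i.e. it is an internal node (for
well-formed trees this is equivalent to its label having rank at least one). -/
def hasChildAt (t : RTree A) (x : List ℕ) : Prop := ∃ i : ℕ, x ++ [i] ∈ dom t

/-- The number of leaves of `t`. -/
noncomputable def leavesCount (t : RTree A) : ℕ := {x | x ∈ dom t ∧ ¬ hasChildAt t x}.ncard

/-- The number of internal nodes of `t`. -/
noncomputable def internalCount (t : RTree A) : ℕ := {x | x ∈ dom t ∧ hasChildAt t x}.ncard

/-- `t` is a chain: its domain is not just the root, and every (internal) node has at
most one internal child. -/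
def isChain (t : RTree A) : Prop :=
  dom t ≠ {[]} ∧
    ∀ x ∈ dom t, {i : ℕ | x ++ [i] ∈ dom t ∧ hasChildAt t (x ++ [i])}.ncard ≤ 1

/-- Well-formedness of a ranked tree: every node labelled by a symbol of rank `i`
has exactly `i` children. -/
inductive WF (rank : A → ℕ) : RTree A → Prop
  | node (a : A) (ts : List (RTree A)) : ts.length = rank a →
      (∀ t ∈ ts, WF rank t) → WF rank (node a ts)

end RTree

/-!
Reading off the labels of the internal nodes of a well-formed tree `t` gives a list `l` of
symbols of positive rank with `l.length = internalCount t`. Counting the nodes as the root plus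
one node per edge gives `leavesCount t + internalCount t = 1 + (l.map rank).sum`, so both counts
only depend on `l`. The chain `chainOf rank a₀ l` (a spine labelled by `l` whose other children
are leaves labelled by a rank-0 symbol `a₀`) has the same internal labels, hence the same counts.
-/

section ConsDecomposition

variable {n : ℕ} {P : List ℕ → Prop} {Q : Fin n → List ℕ → Prop}

theorem setOf_eq_union_iUnion_image_cons
    (hPQ : ∀ i y, P (i :: y) ↔ ∃ h : i < n, Q ⟨i, h⟩ y) :
    {x | P x} = {x | x = [] ∧ P []} ∪ ⋃ i : Fin n, List.cons (i : ℕ) '' {y | Q i y} := by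
  ext (_ | ⟨j, y⟩)
  · simp
  · simp [hPQ, Fin.exists_iff]

theorem finite_setOf_of_cons_iff (hPQ : ∀ i y, P (i :: y) ↔ ∃ h : i < n, Q ⟨i, h⟩ y)
    (hQ : ∀ i, {y | Q i y}.Finite) : {x | P x}.Finite := by
  rw [setOf_eq_union_iUnion_image_cons hPQ]
  exact ((Set.finite_singleton []).subset fun _ h => h.1).union
    (Set.finite_iUnion fun i => (hQ i).image _)

theorem ncard_setOf_of_cons_iff [Decidable (P [])]
    (hPQ : ∀ i y, P (i :: y) ↔ ∃ h : i < n, Q ⟨i, h⟩ y) (hQ : ∀ i, {y | Q i y}.Finite) :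
    {x | P x}.ncard = (if P [] then 1 else 0) + ∑ i, {y | Q i y}.ncard := by
  have hroot : {x : List ℕ | x = [] ∧ P []}.Finite :=
    (Set.finite_singleton []).subset fun _ h => h.1
  have hdisj : Disjoint {x : List ℕ | x = [] ∧ P []}
      (⋃ i : Fin n, List.cons (i : ℕ) '' {y | Q i y}) := by
    simp [Set.disjoint_left]
  have hpairwise :
      Pairwise (Function.onFun Disjoint fun i : Fin n => List.cons (i : ℕ) '' {y | Q i y}) :=
    fun i j hij => by simp [Function.onFun, Set.disjoint_left, Fin.val_inj, hij.symm]
  rw [setOf_eq_union_iUnion_image_cons hPQ,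
    Set.ncard_union_eq hdisj hroot (Set.finite_iUnion fun i => (hQ i).image _),
    Set.ncard_iUnion_of_finite (fun i => (hQ i).image _) hpairwise, finsum_eq_sum_of_fintype]
  congr 1
  · split_ifs with h <;> simp [h]
  · simp only [Set.ncard_image_of_injective _ List.cons_injective]

end ConsDecomposition

namespace RTree

variable {A : Type}

@[elab_as_elim]
theorem ind {motive : RTree A → Prop}
    (node : ∀ a ts, (∀ s ∈ ts, motive s) → motive (node a ts)) : ∀ t, motive t
  | .node a ts => node a ts fun s _ => ind node s
termination_by t => sizeOf t
decreasing_by simp_wf; have := List.sizeOf_lt_of_mem ‹s ∈ ts›; omega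

theorem nil_mem_dom (t : RTree A) : [] ∈ dom t := by
  cases t; simp [dom, subtreeAt]

theorem cons_mem_dom_node {a : A} {ts : List (RTree A)} {i : ℕ} {x : List ℕ} :
    i :: x ∈ dom (node a ts) ↔ ∃ h : i < ts.length, x ∈ dom ts[i] := by
  by_cases h : i < ts.length <;> simp [dom, subtreeAt, h]

theorem hasChildAt_cons_node {a : A} {ts : List (RTree A)} {i : ℕ} {x : List ℕ} :
    hasChildAt (node a ts) (i :: x) ↔ ∃ h : i < ts.length, hasChildAt ts[i] x := by
  simp only [hasChildAt, List.cons_append, cons_mem_dom_node]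
  exact exists_comm

theorem hasChildAt_nil_node {a : A} {ts : List (RTree A)} :
    hasChildAt (node a ts) [] ↔ ts ≠ [] := by
  simp only [hasChildAt, List.nil_append, cons_mem_dom_node, nil_mem_dom, exists_prop, and_true,
    ← List.length_pos_iff]
  exact ⟨fun ⟨i, hi⟩ => by omega, fun h => ⟨0, h⟩⟩

theorem dom_finite (t : RTree A) : (dom t).Finite := by
  induction t using ind with
  | node a ts ih =>
    exact finite_setOf_of_cons_iff (P := (· ∈ dom (node a ts)))
      (Q := fun i y => y ∈ dom ts[i]) (fun _ _ => cons_mem_dom_node)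
      fun i => ih ts[i] (List.getElem_mem i.isLt)

theorem ncard_setOf_node (p : Prop → Prop) (a : A) (ts : List (RTree A))
    [Decidable (p (ts ≠ []))] :
    {x | x ∈ dom (node a ts) ∧ p (hasChildAt (node a ts) x)}.ncard
      = (if p (ts ≠ []) then 1 else 0)
        + (ts.map fun s => {y | y ∈ dom s ∧ p (hasChildAt s y)}.ncard).sum := by
  classical
  rw [ncard_setOf_of_cons_iff (Q := fun i y => y ∈ dom ts[i] ∧ p (hasChildAt ts[i] y))]
  · congr 1
    · simp [hasChildAt_nil_node, nil_mem_dom]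
    · exact Fin.sum_univ_fun_getElem ts fun s => {y | y ∈ dom s ∧ p (hasChildAt s y)}.ncard
  · intro i y
    by_cases h : i < ts.length <;> simp [cons_mem_dom_node, hasChildAt_cons_node, h]
  · exact fun i => (dom_finite _).subset fun _ h => h.1

theorem leavesCount_node (a : A) (ts : List (RTree A)) :
    leavesCount (node a ts) = (if ts = [] then 1 else 0) + (ts.map leavesCount).sum := by
  rw [leavesCount, ncard_setOf_node Not a ts]
  congr 1
  by_cases h : ts = [] <;> simp [h]

theorem internalCount_node (a : A) (ts : List (RTree A)) :
    internalCount (node a ts) = (if ts = [] then 0 else 1) + (ts.map internalCount).sum := by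
  rw [internalCount, ncard_setOf_node (·) a ts]
  congr 1
  by_cases h : ts = [] <;> simp [h]

def internalLabels : RTree A → List A
  | node a ts => if ts = [] then [] else a :: (ts.map internalLabels).flatten

theorem length_internalLabels (t : RTree A) : (internalLabels t).length = internalCount t := by
  induction t using ind with
  | node a ts ih =>
    rw [internalLabels, internalCount_node]
    split_ifs with hne
    · simp [hne]
    · rw [List.length_cons, List.length_flatten, List.map_map, add_comm]
      exact congrArg (1 + List.sum ·) (List.map_congr_left ih)

theorem pos_rank_of_mem_internalLabels {rank : A → ℕ} {t : RTree A} (hwf : WF rank t) {a : A}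
    (ha : a ∈ internalLabels t) : 0 < rank a := by
  induction t using ind with
  | node b ts ih =>
    obtain ⟨_, _, hlen, hts⟩ := hwf
    rw [internalLabels] at ha
    split_ifs at ha with hne
    · cases ha
    · simp only [List.mem_cons, List.mem_flatten, List.mem_map] at ha
      rcases ha with rfl | ⟨_, ⟨s, hs, rfl⟩, ha⟩
      · rwa [← hlen, List.length_pos_iff]
      · exact ih s hs (hts s hs) ha

theorem leavesCount_add_internalCount {rank : A → ℕ} {t : RTree A} (hwf : WF rank t) :
    leavesCount t + internalCount t = 1 + ((internalLabels t).map rank).sum := by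
  induction t using ind with
  | node b ts ih =>
    obtain ⟨_, _, hlen, hts⟩ := hwf
    rw [leavesCount_node, internalCount_node, internalLabels]
    split_ifs with hne
    · simp [hne]
    · have hchildren : (ts.map leavesCount).sum + (ts.map internalCount).sum
          = ts.length + ((ts.map internalLabels).flatten.map rank).sum := by
        rw [← List.sum_map_add, List.map_congr_left fun s hs => ih s hs (hts s hs),
          List.sum_map_add, List.map_const', List.sum_replicate, smul_eq_mul, mul_one,
          List.map_flatten, List.sum_flatten, List.map_map, List.map_map]
        rfl
      rw [List.map_cons, List.sum_cons, ← hlen]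
      omega

theorem not_hasChildAt_leaf (a : A) (x : List ℕ) : ¬ hasChildAt (node a []) x := by
  rcases x with _ | ⟨i, y⟩
  · simp [hasChildAt_nil_node]
  · simp [hasChildAt_cons_node]

def chainOf (rank : A → ℕ) (a₀ : A) : List A → RTree A
  | [] => node a₀ []
  | a :: l => node a (chainOf rank a₀ l :: List.replicate (rank a - 1) (node a₀ []))

theorem internalLabels_chainOf (rank : A → ℕ) (a₀ : A) (l : List A) :
    internalLabels (chainOf rank a₀ l) = l := by
  induction l with
  | nil => simp [chainOf, internalLabels]
  | cons a l ih =>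
    rw [chainOf, internalLabels, if_neg (List.cons_ne_nil _ _)]
    simp [ih, List.map_replicate, internalLabels]

theorem wf_chainOf {rank : A → ℕ} {a₀ : A} (h₀ : rank a₀ = 0) {l : List A}
    (hl : ∀ a ∈ l, 0 < rank a) : WF rank (chainOf rank a₀ l) := by
  have hleaf : WF rank (node a₀ []) := .node a₀ [] h₀.symm (by simp)
  induction l with
  | nil => exact hleaf
  | cons a l ih =>
    refine .node a _ ?_ ?_
    · have := hl a List.mem_cons_self
      simp only [List.length_cons, List.length_replicate]
      omega
    · simp only [List.mem_cons, List.mem_replicate]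
      rintro s (rfl | ⟨-, rfl⟩)
      · exact ih fun b hb => hl b (List.mem_cons_of_mem a hb)
      · exact hleaf

theorem not_hasChildAt_chainOf_append (rank : A → ℕ) (a₀ : A) (l : List A) (x : List ℕ)
    {i : ℕ} (hi : i ≠ 0) :
    ¬ hasChildAt (chainOf rank a₀ l) (x ++ [i]) := by
  induction l generalizing x with
  | nil => exact not_hasChildAt_leaf _ _
  | cons a l ih =>
    rw [chainOf]
    rcases x with _ | ⟨j, y⟩
    · obtain ⟨k, rfl⟩ := Nat.exists_eq_succ_of_ne_zero hi
      simp [hasChildAt_cons_node, not_hasChildAt_leaf]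
    · rw [List.cons_append, hasChildAt_cons_node]
      rintro ⟨hj, hchild⟩
      rcases j with _ | k
      · exact ih y hchild
      · simp only [List.getElem_cons_succ, List.getElem_replicate] at hchild
        exact not_hasChildAt_leaf _ _ hchild

theorem isChain_chainOf (rank : A → ℕ) (a₀ : A) {l : List A} (hl : l ≠ []) :
    isChain (chainOf rank a₀ l) := by
  refine ⟨?_, fun x _ => ?_⟩
  · obtain ⟨a, l, rfl⟩ := List.exists_cons_of_ne_nil hl
    intro hdom
    have : [0] ∈ dom (chainOf rank a₀ (a :: l)) := by
      simp [chainOf, cons_mem_dom_node, nil_mem_dom]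
    simp [hdom] at this
  · have hsub : {i | x ++ [i] ∈ dom (chainOf rank a₀ l) ∧
        hasChildAt (chainOf rank a₀ l) (x ++ [i])} ⊆ {0} := fun i hi =>
      by_contra fun h => not_hasChildAt_chainOf_append rank a₀ l x h hi.2
    exact (Set.ncard_le_ncard hsub (Set.finite_singleton 0)).trans_eq (Set.ncard_singleton 0)

end RTree

theorem stmt11_general (A : Type) (rank : A → ℕ) (h0 : ∃ a, rank a = 0)
    (t : RTree A) (hwf : RTree.WF rank t) (hint : 1 ≤ RTree.internalCount t) :
    ∃ c : RTree A, RTree.WF rank c ∧ RTree.isChain c ∧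
      RTree.leavesCount c = RTree.leavesCount t ∧
      RTree.internalCount c = RTree.internalCount t := by
  obtain ⟨a₀, ha₀⟩ := h0
  set c := RTree.chainOf rank a₀ t.internalLabels
  have hc : RTree.WF rank c :=
    RTree.wf_chainOf ha₀ fun _ => RTree.pos_rank_of_mem_internalLabels hwf
  have hlabels : c.internalLabels = t.internalLabels := RTree.internalLabels_chainOf ..
  have hinternal : c.internalCount = t.internalCount := by
    rw [← RTree.length_internalLabels, ← RTree.length_internalLabels, hlabels]
  have hne : t.internalLabels ≠ [] := by
    rw [← List.length_pos_iff, RTree.length_internalLabels]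
    exact hint
  refine ⟨c, hc, RTree.isChain_chainOf rank a₀ hne, ?_, hinternal⟩
  have hsum_c := RTree.leavesCount_add_internalCount hc
  have hsum_t := RTree.leavesCount_add_internalCount hwf
  rw [hlabels] at hsum_c
  omega

/-- Let `A` be a ranked alphabet (with a rank-0 symbol). For every
ranked tree `t` over `A` with at least one internal node there is a chain `c` over `A`
with exactly the same number of leaves and exactly the same number of internal nodes. -/
theorem stmt11 (A : Type) [Fintype A] (rank : A → ℕ) (h0 : ∃ a, rank a = 0)
    (t : RTree A) (hwf : RTree.WF rank t) (hint : 1 ≤ RTree.internalCount t) :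
    ∃ c : RTree A, RTree.WF rank c ∧ RTree.isChain c ∧
      RTree.leavesCount c = RTree.leavesCount t ∧
      RTree.internalCount c = RTree.internalCount t :=
  stmt11_general A rank h0 t hwf hint
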